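/- Let G = (g_1, ..., g_m) be a list of nonzero polynomials in R whose list of leading monomials (lt(g_1), ..., lt(g_m)) satisfies the Extended Criterion, and suppose that each of S(g_1, g_2), S(g_2, g_3), ..., S(g_{m−1}, g_m) has an S-representation with respect to G. If p = gcd(g_1, g_m), then the leading monomials lt(g_1/p) and lt(g_m/p) are relatively prime. -/

import Mathlib

/-!
The S-representations of the consecutive S-polynomials are syzygies of `G`; they form the rows
of an `m × (m + 1)` polynomial matrix `C` with `C G = 0`. By Cramer's rule the determinant `Δ`
of the first `m` columns satisfies `g_m ∣ Δ g_1`, and since `g_1 / p` and `g_m / p` are coprime,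
`g_m / p` divides `Δ`. In `Δ` the diagonal entries have leading monomials `σ_{g_i, g_{i+1}}` while
the entries below the diagonal are dominated, so `lt(Δ) = ∏ σ_{g_i, g_{i+1}}`. Along a variable
`x` on which the degrees are increasing this product has degree `deg_x t_m - deg_x t_1`, along one
on which they are decreasing it has degree `0`; as `lt(g_m / p)` divides it, EVar forces
`lt(g_1 / p)` and `lt(g_m / p)` to share no variable.
-/

open MvPolynomial

namespace Paper

variable {n : ℕ} {K : Type*} [Field K]

/-- The leading exponent (exponent of the leading monomial) of a polynomial
with respect to a monomial order. -/
noncomputable def lexp (mo : MonomialOrder (Fin n)) (p : MvPolynomial (Fin n) K) :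
    Fin n →₀ ℕ :=
  mo.toSyn.symm (p.support.sup fun e => mo.toSyn e)

/-- The leading coefficient. -/
noncomputable def lc (mo : MonomialOrder (Fin n)) (p : MvPolynomial (Fin n) K) : K :=
  p.coeff (lexp mo p)

/-- The exponent of σ_{f,g} = lcm(lt f, lt g)/lt f. -/
noncomputable def sigma (mo : MonomialOrder (Fin n)) (f g : MvPolynomial (Fin n) K) :
    Fin n →₀ ℕ :=
  (lexp mo f ⊔ lexp mo g) - lexp mo f

/-- The S-polynomial  S(f,g) = lc(g)·σ_{f,g}·f − lc(f)·σ_{g,f}·g. -/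
noncomputable def Spoly (mo : MonomialOrder (Fin n)) (f g : MvPolynomial (Fin n) K) :
    MvPolynomial (Fin n) K :=
  monomial (sigma mo f g) (lc mo g) * f - monomial (sigma mo g f) (lc mo f) * g

/-- `h` is a `t`-representation of `p` with respect to `G`. -/
def IsTRep (mo : MonomialOrder (Fin n)) {m : ℕ} (G : Fin m → MvPolynomial (Fin n) K)
    (p : MvPolynomial (Fin n) K) (t : Fin n →₀ ℕ) (h : Fin m → MvPolynomial (Fin n) K) :
    Prop :=
  p = ∑ i, h i * G i ∧ ∀ i, h i = 0 ∨ mo.toSyn (lexp mo (h i * G i)) ≤ mo.toSyn t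

/-- `S(g_i, g_j)` has an S-representation with respect to `G`. -/
def HasSRep (mo : MonomialOrder (Fin n)) {m : ℕ} (G : Fin m → MvPolynomial (Fin n) K)
    (i j : Fin m) : Prop :=
  ∃ t h, mo.toSyn t < mo.toSyn (lexp mo (G i) ⊔ lexp mo (G j)) ∧
    IsTRep mo G (Spoly mo (G i) (G j)) t h

/-- `p` reduces to zero with respect to `G`. -/
def ReducesToZero (mo : MonomialOrder (Fin n)) {m : ℕ}
    (G : Fin m → MvPolynomial (Fin n) K) (p : MvPolynomial (Fin n) K) : Prop :=
  p = 0 ∨ ∃ (r : ℕ) (e : Fin r → (Fin n →₀ ℕ)) (c : Fin r → K) (ν : Fin r → Fin m),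
    (∀ i, c i ≠ 0) ∧
    p = ∑ i, monomial (e i) (c i) * G (ν i) ∧
    ∀ i : Fin r, (e i + lexp mo (G (ν i))) ∈
      (p - ∑ j ∈ Finset.univ.filter (fun j => j < i),
        monomial (e j) (c j) * G (ν j)).support

/-- `G` is a Gröbner basis: the leading monomial of every nonzero element of the ideal
generated by `G` is divisible by the leading monomial of some `G i`. -/
def IsGroebner (mo : MonomialOrder (Fin n)) {m : ℕ}
    (G : Fin m → MvPolynomial (Fin n) K) : Prop :=
  ∀ p ∈ Ideal.span (Set.range G), p ≠ 0 → ∃ i, lexp mo (G i) ≤ lexp mo p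

/-- The Extended Criterion for a list of monomials (given as exponent vectors). -/
def EC {n : ℕ} {m : ℕ} (t : Fin (m + 1) → (Fin n →₀ ℕ)) : Prop :=
  (∀ k, (t 0 ⊓ t (Fin.last m)) ≤ t k) ∧
  ∀ x : Fin n, (t 0 ⊓ t (Fin.last m)) x = 0 ∨
    Monotone (fun i => t i x) ∨ Antitone (fun i => t i x)

end Paper

theorem Equiv.Perm.eq_one_of_forall_apply_le {ι : Type*} [LinearOrder ι] [WellFoundedLT ι]
    {π : Equiv.Perm ι} (h : ∀ i, π i ≤ i) : π = 1 := by
  ext i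
  induction i using WellFoundedLT.induction with
  | _ i ih => exact (h i).antisymm (not_lt.1 fun hlt => hlt.ne (π.injective (ih _ hlt)))

namespace MonomialOrder

variable {σ R : Type*} [CommRing R] {mo : MonomialOrder σ}

theorem degree_eq_of_coeff_eq {f g : MvPolynomial σ R} (hg : g ≠ 0)
    (h : ∀ d, mo.toSyn (mo.degree g) ≤ mo.toSyn d → f.coeff d = g.coeff d) :
    mo.degree f = mo.degree g ∧ mo.leadingCoeff f = mo.leadingCoeff g := by
  have hlc : f.coeff (mo.degree g) = mo.leadingCoeff g := h _ le_rfl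
  have hdeg : mo.degree f = mo.degree g := by
    refine mo.toSyn.injective (le_antisymm (not_lt.1 fun hlt => ?_) ?_)
    · have hf : f ≠ 0 := by
        rintro rfl
        exact mo.leadingCoeff_ne_zero_iff.2 hg (by simpa using hlc.symm)
      exact mo.leadingCoeff_ne_zero_iff.2 hf ((h _ hlt.le).trans (mo.coeff_eq_zero_of_lt hlt))
    · exact mo.le_degree (mem_support_iff.2 (hlc ▸ mo.leadingCoeff_ne_zero_iff.2 hg))
  exact ⟨hdeg, by rw [leadingCoeff, hdeg, hlc]⟩

theorem degree_le_of_dvd [NoZeroDivisors R] {f g : MvPolynomial σ R} (h : f ∣ g) (hg : g ≠ 0) :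
    mo.degree f ≤ mo.degree g := by
  obtain ⟨q, rfl⟩ := h
  rw [mo.degree_mul (left_ne_zero_of_mul hg) (right_ne_zero_of_mul hg)]
  exact le_self_add

theorem sub_ne_zero_and_toSyn_degree_sub_add_eq {f g : MvPolynomial σ R} {e : σ →₀ ℕ} {w : mo.syn}
    (hf : f ≠ 0) (hfw : mo.toSyn (mo.degree f) + mo.toSyn e = w)
    (hgw : g ≠ 0 → mo.toSyn (mo.degree g) + mo.toSyn e < w) :
    f - g ≠ 0 ∧ mo.toSyn (mo.degree (f - g)) + mo.toSyn e = w := by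
  rcases eq_or_ne g 0 with rfl | hg
  · simpa using ⟨hf, hfw⟩
  have hlt : mo.degree g ≺[mo] mo.degree f := lt_of_add_lt_add_right (hfw ▸ hgw hg)
  refine ⟨mo.leadingCoeff_ne_zero_iff.1 ?_, by rw [mo.degree_sub_of_lt hlt, hfw]⟩
  rw [mo.leadingCoeff_sub_of_lt hlt]
  exact mo.leadingCoeff_ne_zero_iff.2 hf

theorem degree_det_of_dominant_diagonal [IsDomain R] {ι : Type*} [Fintype ι]
    [LinearOrder ι] (N : Matrix ι ι (MvPolynomial σ R)) (w v : ι → mo.syn)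
    (hle : ∀ i j, N i j ≠ 0 → mo.toSyn (mo.degree (N i j)) + v j ≤ w i)
    (hlt : ∀ i j, j < i → N i j ≠ 0 → mo.toSyn (mo.degree (N i j)) + v j < w i)
    (hdiag : ∀ i, N i i ≠ 0 ∧ mo.toSyn (mo.degree (N i i)) + v i = w i) :
    N.det ≠ 0 ∧ mo.degree N.det = ∑ i, mo.degree (N i i) := by
  have hP : ∏ i, N i i ≠ 0 := Finset.prod_ne_zero_iff.2 fun i _ => (hdiag i).1
  have hPdeg : mo.degree (∏ i, N i i) = ∑ i, mo.degree (N i i) :=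
    mo.degree_prod fun i _ => (hdiag i).1
  have hterm : ∀ π : Equiv.Perm ι, π ≠ 1 → (∏ i, N (π i) i) = 0 ∨
      mo.toSyn (mo.degree (∏ i, N (π i) i)) < mo.toSyn (mo.degree (∏ i, N i i)) := by
    intro π hπ
    rcases em (∃ i, N (π i) i = 0) with ⟨i, hi⟩ | hz
    · exact .inl (Finset.prod_eq_zero (Finset.mem_univ i) hi)
    replace hz : ∀ i, N (π i) i ≠ 0 := not_exists.1 hz
    -- a permutation `π ≠ 1` picks an entry below the diagonal, where the bound is strict
    obtain ⟨i₀, hi₀⟩ : ∃ i, i < π i := by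
      by_contra! h
      exact hπ (Equiv.Perm.eq_one_of_forall_apply_le h)
    have hsum := Finset.sum_lt_sum (fun i _ => hle (π i) i (hz i))
      ⟨i₀, Finset.mem_univ _, hlt _ _ hi₀ (hz i₀)⟩
    rw [Equiv.sum_comp π w, ← Finset.sum_congr rfl fun i _ => (hdiag i).2,
      Finset.sum_add_distrib, Finset.sum_add_distrib] at hsum
    right
    rw [mo.degree_prod fun i _ => hz i, hPdeg, map_sum, map_sum]
    exact lt_of_add_lt_add_right hsum
  have hcoeff : ∀ d, mo.toSyn (mo.degree (∏ i, N i i)) ≤ mo.toSyn d →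
      N.det.coeff d = (∏ i, N i i).coeff d := by
    intro d hd
    rw [Matrix.det_apply, coeff_sum, Finset.sum_eq_single 1 _ (by simp)]
    · simp
    intro π _ hπ
    rcases hterm π hπ with h0 | hlt
    · simp [h0]
    · rw [Units.smul_def, coeff_smul, mo.coeff_eq_zero_of_lt (hlt.trans_le hd), smul_zero]
  obtain ⟨hdeg, hlc⟩ := degree_eq_of_coeff_eq hP hcoeff
  exact ⟨mo.leadingCoeff_ne_zero_iff.1 (hlc ▸ mo.leadingCoeff_ne_zero_iff.2 hP), hdeg.trans hPdeg⟩

end MonomialOrder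

theorem Fin.sum_succ_tsub_castSucc {m : ℕ} {u : Fin (m + 1) → ℕ} (hu : Monotone u) :
    ∑ i : Fin m, (u i.succ - u i.castSucc) = u (Fin.last m) - u 0 := by
  induction m with
  | zero => simp
  | succ m ih =>
    have h := ih (hu.comp Fin.strictMono_castSucc.monotone)
    have h₁ := hu (Fin.zero_le (Fin.last m).castSucc)
    have h₂ := hu (Fin.castSucc_le_succ (Fin.last m))
    simp only [Function.comp_apply, ← Fin.succ_castSucc, Fin.castSucc_zero] at h
    rw [Fin.sum_univ_castSucc, h]
    simp only [Fin.succ_last, Nat.succ_eq_add_one] at h₂ ⊢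
    omega

open Matrix in
theorem Matrix.last_dvd_det_submatrix_castSucc_mul {R : Type*} [CommRing R] {m : ℕ}
    (C : Matrix (Fin m) (Fin (m + 1)) R) {g : Fin (m + 1) → R} (hC : C *ᵥ g = 0) :
    g (Fin.last m) ∣ (C.submatrix id Fin.castSucc).det * g 0 := by
  cases m with
  | zero => simp
  | succ m =>
    set N := C.submatrix id Fin.castSucc
    have hN : N *ᵥ (g ∘ Fin.castSucc) = -g (Fin.last _) • fun i => C i (Fin.last _) := by
      funext i
      have := congrFun hC i
      rw [mulVec, dotProduct, Fin.sum_univ_castSucc, Pi.zero_apply] at this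
      simp only [mulVec, dotProduct, N, submatrix_apply, id, Function.comp_apply, Pi.smul_apply,
        smul_eq_mul]
      linear_combination this
    have h0 := congrFun (congrArg (N.adjugate *ᵥ ·) hN) 0
    simp only [mulVec_mulVec, adjugate_mul, smul_mulVec, one_mulVec, mulVec_smul] at h0
    exact ⟨-(N.adjugate *ᵥ fun i => C i (Fin.last _)) 0, by
      simp only [Pi.smul_apply, smul_eq_mul, Function.comp_apply,
        Fin.castSucc_zero] at h0
      rw [h0]
      ring⟩

theorem isRelPrime_of_forall_dvd_mul {R : Type*} [CommMonoidWithZero R] [IsCancelMulZero R]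
    {a b d : R} (hd : d ≠ 0) (h : ∀ q, q ∣ a * d → q ∣ b * d → q ∣ d) : IsRelPrime a b :=
  fun q ha hb => isUnit_of_dvd_one <| (mul_dvd_mul_iff_right hd).1 <| by
    simpa using h _ (mul_dvd_mul_right ha d) (mul_dvd_mul_right hb d)

namespace Paper

theorem EC.inf_eq_zero {n m : ℕ} {t : Fin (m + 1) → (Fin n →₀ ℕ)} (hEC : EC t)
    {a b c : Fin n →₀ ℕ} (h₀ : t 0 = a + c) (hₘ : t (Fin.last m) = b + c)
    (hb : b ≤ ∑ i : Fin m, (t i.castSucc ⊔ t i.succ - t i.castSucc)) :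
    a ⊓ b = 0 := by
  ext x
  have h₀x := DFunLike.congr_fun h₀ x
  have hₘx := DFunLike.congr_fun hₘ x
  have hbx : b x ≤ ∑ i : Fin m, (t i.succ x - t i.castSucc x) := by
    refine (hb x).trans_eq ?_
    rw [Finsupp.finsetSum_apply]
    refine Finset.sum_congr rfl fun i _ => ?_
    simp only [Finsupp.tsub_apply, Finsupp.sup_apply]
    omega
  simp only [Finsupp.add_apply] at h₀x hₘx
  simp only [Finsupp.inf_apply, Finsupp.coe_zero, Pi.zero_apply]
  rcases hEC.2 x with hx | hmono | hanti
  · simp only [Finsupp.inf_apply, h₀x, hₘx] at hx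
    omega
  · rw [Fin.sum_succ_tsub_castSucc hmono] at hbx
    omega
  · rw [Finset.sum_eq_zero fun i _ => Nat.sub_eq_zero_of_le (hanti (Fin.castSucc_le_succ i))]
      at hbx
    omega

section SyzygyMatrix

variable {n : ℕ} {K : Type*} [Field K] (mo : MonomialOrder (Fin n))

theorem lexp_eq_degree (p : MvPolynomial (Fin n) K) : lexp mo p = mo.degree p := rfl

theorem lexp_monomial_sigma_add {f g : MvPolynomial (Fin n) K} {c : K} (hc : c ≠ 0) :
    lexp mo (monomial (sigma mo f g) c) + lexp mo f = lexp mo f ⊔ lexp mo g := by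
  classical
  rw [lexp_eq_degree, mo.degree_monomial, if_neg hc]
  exact tsub_add_cancel_of_le le_sup_left

/-- Row `i` is the syzygy of `G` given by the S-representation `h i` of `S(G i, G (i + 1))`. -/
noncomputable def syzygyMatrix {m : ℕ} (G : Fin (m + 1) → MvPolynomial (Fin n) K)
    (h : Fin m → Fin (m + 1) → MvPolynomial (Fin n) K) :
    Matrix (Fin m) (Fin (m + 1)) (MvPolynomial (Fin n) K) :=
  Matrix.of fun i =>
    Pi.single i.castSucc (monomial (sigma mo (G i.castSucc) (G i.succ)) (lc mo (G i.succ))) -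
      Pi.single i.succ (monomial (sigma mo (G i.succ) (G i.castSucc)) (lc mo (G i.castSucc))) -
        h i

variable {mo} {m : ℕ} {G : Fin (m + 1) → MvPolynomial (Fin n) K}
  {h : Fin m → Fin (m + 1) → MvPolynomial (Fin n) K}

open Matrix in
theorem syzygyMatrix_mulVec
    (hrep : ∀ i, Spoly mo (G i.castSucc) (G i.succ) = ∑ j, h i j * G j) :
    syzygyMatrix mo G h *ᵥ G = 0 := by
  funext i
  simp only [mulVec, syzygyMatrix, of_apply, Pi.zero_apply]
  rw [sub_dotProduct, sub_dotProduct, single_dotProduct, single_dotProduct, dotProduct, ← hrep i,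
    Spoly, sub_self]

theorem syzygyMatrix_apply_ne_zero_and_toSyn_lexp_add_eq (hG : ∀ i, G i ≠ 0)
    (hh : ∀ i j, h i j ≠ 0 → mo.toSyn (lexp mo (h i j)) + mo.toSyn (lexp mo (G j)) <
      mo.toSyn (lexp mo (G i.castSucc) ⊔ lexp mo (G i.succ)))
    {i : Fin m} {j : Fin (m + 1)} (hj : j = i.castSucc ∨ j = i.succ) :
    syzygyMatrix mo G h i j ≠ 0 ∧
      mo.toSyn (lexp mo (syzygyMatrix mo G h i j)) + mo.toSyn (lexp mo (G j)) =
        mo.toSyn (lexp mo (G i.castSucc) ⊔ lexp mo (G i.succ)) := by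
  have hne : i.castSucc ≠ i.succ := (Fin.castSucc_lt_succ (i := i)).ne
  have hlc : ∀ k, lc mo (G k) ≠ 0 := fun k => mo.leadingCoeff_ne_zero_iff.2 (hG k)
  rcases hj with rfl | rfl
  · have hC : syzygyMatrix mo G h i i.castSucc =
        monomial (sigma mo (G i.castSucc) (G i.succ)) (lc mo (G i.succ)) - h i i.castSucc := by
      simp [syzygyMatrix, hne]
    rw [hC]
    refine MonomialOrder.sub_ne_zero_and_toSyn_degree_sub_add_eq
      (monomial_eq_zero.not.2 (hlc _)) ?_ (hh i _)
    rw [← map_add]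
    exact congrArg mo.toSyn (lexp_monomial_sigma_add mo (hlc _))
  · have hC : syzygyMatrix mo G h i i.succ =
        -monomial (sigma mo (G i.succ) (G i.castSucc)) (lc mo (G i.castSucc)) - h i i.succ := by
      simp [syzygyMatrix, hne.symm]
    rw [hC]
    refine MonomialOrder.sub_ne_zero_and_toSyn_degree_sub_add_eq
      (neg_ne_zero.2 (monomial_eq_zero.not.2 (hlc _))) ?_ (hh i _)
    rw [mo.degree_neg, ← map_add, sup_comm]
    exact congrArg mo.toSyn (lexp_monomial_sigma_add mo (hlc _))

theorem toSyn_lexp_syzygyMatrix_apply_add_lt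
    (hh : ∀ i j, h i j ≠ 0 → mo.toSyn (lexp mo (h i j)) + mo.toSyn (lexp mo (G j)) <
      mo.toSyn (lexp mo (G i.castSucc) ⊔ lexp mo (G i.succ)))
    {i : Fin m} {j : Fin (m + 1)} (hj₁ : j ≠ i.castSucc) (hj₂ : j ≠ i.succ)
    (hC : syzygyMatrix mo G h i j ≠ 0) :
    mo.toSyn (lexp mo (syzygyMatrix mo G h i j)) + mo.toSyn (lexp mo (G j)) <
      mo.toSyn (lexp mo (G i.castSucc) ⊔ lexp mo (G i.succ)) := by
  have hC' : syzygyMatrix mo G h i j = -h i j := by simp [syzygyMatrix, hj₁, hj₂]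
  rw [hC'] at hC ⊢
  rw [lexp_eq_degree, mo.degree_neg]
  exact hh i j (neg_ne_zero.1 hC)

theorem det_syzygyMatrix_submatrix_ne_zero_and_lexp_eq (hG : ∀ i, G i ≠ 0)
    (hh : ∀ i j, h i j ≠ 0 → mo.toSyn (lexp mo (h i j)) + mo.toSyn (lexp mo (G j)) <
      mo.toSyn (lexp mo (G i.castSucc) ⊔ lexp mo (G i.succ))) :
    ((syzygyMatrix mo G h).submatrix id Fin.castSucc).det ≠ 0 ∧
      lexp mo ((syzygyMatrix mo G h).submatrix id Fin.castSucc).det =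
        ∑ i : Fin m, sigma mo (G i.castSucc) (G i.succ) := by
  have htight := fun {i j} =>
    syzygyMatrix_apply_ne_zero_and_toSyn_lexp_add_eq hG hh (i := i) (j := j)
  have hstrict := fun {i j} => toSyn_lexp_syzygyMatrix_apply_add_lt hh (i := i) (j := j)
  have hle : ∀ (i : Fin m) (j : Fin m), syzygyMatrix mo G h i j.castSucc ≠ 0 →
      mo.toSyn (lexp mo (syzygyMatrix mo G h i j.castSucc)) + mo.toSyn (lexp mo (G j.castSucc)) ≤
        mo.toSyn (lexp mo (G i.castSucc) ⊔ lexp mo (G i.succ)) := by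
    intro i j hC
    by_cases hj : j.castSucc = i.castSucc ∨ j.castSucc = i.succ
    · exact (htight hj).2.le
    · rw [not_or] at hj
      exact (hstrict hj.1 hj.2 hC).le
  have hlt : ∀ (i j : Fin m), j < i → syzygyMatrix mo G h i j.castSucc ≠ 0 →
      mo.toSyn (lexp mo (syzygyMatrix mo G h i j.castSucc)) + mo.toSyn (lexp mo (G j.castSucc)) <
        mo.toSyn (lexp mo (G i.castSucc) ⊔ lexp mo (G i.succ)) := by
    intro i j hji
    have h₁ : j.castSucc < i.castSucc := Fin.castSucc_lt_castSucc_iff.2 hji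
    exact hstrict h₁.ne (h₁.trans (Fin.castSucc_lt_succ (i := i))).ne
  obtain ⟨hdet, hdeg⟩ := MonomialOrder.degree_det_of_dominant_diagonal
    ((syzygyMatrix mo G h).submatrix id Fin.castSucc)
    (fun i => mo.toSyn (lexp mo (G i.castSucc) ⊔ lexp mo (G i.succ)))
    (fun j => mo.toSyn (lexp mo (G j.castSucc))) hle hlt fun i => htight (.inl rfl)
  refine ⟨hdet, hdeg.trans (Finset.sum_congr rfl fun i _ => eq_tsub_of_add_eq ?_)⟩
  exact mo.toSyn.injective ((map_add _ _ _).trans (htight (i := i) (.inl rfl)).2)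

theorem exists_lexp_eq_sum_sigma_and_last_dvd_mul_first (hG : ∀ i, G i ≠ 0)
    (hchain : ∀ i : Fin m, HasSRep mo G i.castSucc i.succ) :
    ∃ D : MvPolynomial (Fin n) K, D ≠ 0 ∧
      lexp mo D = ∑ i : Fin m, sigma mo (G i.castSucc) (G i.succ) ∧ G (Fin.last m) ∣ D * G 0 := by
  choose t h ht hrep using hchain
  have hh : ∀ i j, h i j ≠ 0 → mo.toSyn (lexp mo (h i j)) + mo.toSyn (lexp mo (G j)) <
      mo.toSyn (lexp mo (G i.castSucc) ⊔ lexp mo (G i.succ)) := by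
    intro i j hij
    rw [← map_add, lexp_eq_degree, lexp_eq_degree, ← mo.degree_mul hij (hG j)]
    exact (((hrep i).2 j).resolve_left hij).trans_lt (ht i)
  obtain ⟨hdet, hdeg⟩ := det_syzygyMatrix_submatrix_ne_zero_and_lexp_eq hG hh
  exact ⟨_, hdet, hdeg, Matrix.last_dvd_det_submatrix_castSucc_mul _
    (syzygyMatrix_mulVec fun i => (hrep i).1)⟩

end SyzygyMatrix

/-- If the leading monomials of `G = (g_1, …, g_{m+1})` satisfy the Extended Criterion and
each consecutive S-polynomial has an S-representation with respect to `G`, then the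
leading monomials of the cofactors of `p = gcd(g_1, g_{m+1})` are relatively prime. -/
theorem ec_implies_relprime_cofactor_lts {n : ℕ} {K : Type*} [Field K]
    (mo : MonomialOrder (Fin n)) {m : ℕ}
    (G : Fin (m + 1) → MvPolynomial (Fin n) K) (hG : ∀ i, G i ≠ 0)
    (hEC : EC (fun i => lexp mo (G i)))
    (hchain : ∀ i : Fin m, HasSRep mo G i.castSucc i.succ)
    (p f₁ fₘ : MvPolynomial (Fin n) K)
    (hp₁ : G 0 = f₁ * p) (hpₘ : G (Fin.last m) = fₘ * p)
    (hpgcd : ∀ q : MvPolynomial (Fin n) K, q ∣ G 0 → q ∣ G (Fin.last m) → q ∣ p) :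
    lexp mo f₁ ⊓ lexp mo fₘ = 0 := by
  have hG₀ : f₁ * p ≠ 0 := hp₁ ▸ hG 0
  have hGₘ : fₘ * p ≠ 0 := hpₘ ▸ hG _
  have hp : p ≠ 0 := right_ne_zero_of_mul hG₀
  obtain ⟨D, hD, hDlexp, hdvd⟩ := exists_lexp_eq_sum_sigma_and_last_dvd_mul_first hG hchain
  have hcoprime : IsRelPrime fₘ f₁ :=
    isRelPrime_of_forall_dvd_mul hp fun q hₘ h₀ => hpgcd q (hp₁ ▸ h₀) (hpₘ ▸ hₘ)
  have hfₘD : fₘ ∣ D := by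
    rw [hp₁, hpₘ, ← mul_assoc] at hdvd
    exact hcoprime.dvd_of_dvd_mul_right ((mul_dvd_mul_iff_right hp).1 hdvd)
  refine hEC.inf_eq_zero (c := lexp mo p) ?_ ?_ (hDlexp ▸ MonomialOrder.degree_le_of_dvd hfₘD hD)
  · rw [hp₁]
    exact mo.degree_mul (left_ne_zero_of_mul hG₀) hp
  · rw [hpₘ]
    exact mo.degree_mul (left_ne_zero_of_mul hGₘ) hp

end Paper
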